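/- arXiv:0805.2205 — 7 statements merged into one kernel-verified Lean document; each statement's English description precedes it below -/
import Mathlib

section
/- Let p = 2 and let n be a positive integer. If C is a self-orthogonal code of length n over Z_4, then the residue code π(C) is doubly even, and π(C) ⊆ ι^{-1}(C) ⊆ π(C)^⊥. -/
open scoped BigOperators

namespace Paper

/-- Self-orthogonality of a set of vectors w.r.t. the standard inner product. -/
def sorth {m : ℕ} {ι : Type} [Fintype ι] (S : Set (ι → ZMod m)) : Prop :=
  ∀ x ∈ S, ∀ y ∈ S, ∑ i, x i * y i = 0

/-- The dual (as a set) of a set of vectors w.r.t. the standard inner product. -/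
def dualSet {m : ℕ} {ι : Type} [Fintype ι] (S : Set (ι → ZMod m)) : Set (ι → ZMod m) :=
  {x | ∀ y ∈ S, ∑ i, x i * y i = 0}

/-- A set of vectors is doubly even if every element has Hamming weight divisible by 4. -/
def doublyEven {m : ℕ} {ι : Type} [Fintype ι] (S : Set (ι → ZMod m)) : Prop :=
  ∀ x ∈ S, 4 ∣ (Finset.univ.filter fun i => x i ≠ 0).card

/-- Coordinatewise reduction map `(Z_{p^2})^ι → (Z_p)^ι`. -/
def res (p : ℕ) [Fact p.Prime] {ι : Type} (v : ι → ZMod (p ^ 2)) : ι → ZMod p :=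
  fun i => ZMod.castHom (dvd_pow_self p (by norm_num)) (ZMod p) (v i)

/-- The injection `(Z_p)^ι → (Z_{p^2})^ι` induced by `Z_p ≅ pZ_{p^2} ⊆ Z_{p^2}`. -/
def iot (p : ℕ) {ι : Type} (v : ι → ZMod p) : ι → ZMod (p ^ 2) :=
  fun i => (p : ZMod (p ^ 2)) * (ZMod.cast (v i))

/-- Coordinatewise reduction map `(Z_4)^ι → (Z_2)^ι`. -/
def res4 {ι : Type} (v : ι → ZMod 4) : ι → ZMod 2 :=
  fun i => ZMod.castHom (by norm_num : (2:ℕ) ∣ 4) (ZMod 2) (v i)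

/-- The injection `(Z_2)^ι → (Z_4)^ι`. -/
def iot4 {ι : Type} (v : ι → ZMod 2) : ι → ZMod 4 :=
  fun i => (2 : ZMod 4) * (ZMod.cast (v i))

/-- Euclidean weight on `Z_4`. -/
def ewt (x : ZMod 4) : ℕ := if x = 0 then 0 else if x = 2 then 4 else 1

/-- A quaternary code is even if every codeword has Euclidean weight divisible by 8. -/
def evenCode {ι : Type} [Fintype ι] (S : Set (ι → ZMod 4)) : Prop :=
  ∀ x ∈ S, 8 ∣ ∑ i, ewt (x i)

/-- The code over `Z_q` generated by the rows of an integer matrix. -/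
def intRowSpan (q : ℕ) {κ ι : Type} (G : Matrix κ ι ℤ) :
    Submodule (ZMod q) (ι → ZMod q) :=
  Submodule.span (ZMod q) (Set.range fun i => fun c => ((G i c : ℤ) : ZMod q))

/-- The Gaussian binomial coefficient `[n choose k]_p`. -/
def gauss (p n k : ℕ) : ℚ :=
  ∏ i ∈ Finset.range k, ((p : ℚ) ^ n - (p : ℚ) ^ i) / ((p : ℚ) ^ k - (p : ℚ) ^ i)


lemma sq_eq_ind (x : ZMod 4) :
    x * x = if (ZMod.castHom (by norm_num : (2:ℕ) ∣ 4) (ZMod 2) x) ≠ 0 then 1 else 0 := by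
  revert x; decide

lemma two_mul_cast_res (a : ZMod 4) :
    (2 : ZMod 4) * (ZMod.cast (ZMod.castHom (by norm_num : (2:ℕ) ∣ 4) (ZMod 2) a) : ZMod 4)
      = 2 * a := by revert a; decide

lemma mul_cast_eq (a : ZMod 2) (b : ZMod 4) :
    (2 : ZMod 4) * (ZMod.cast a) * b
      = 2 * (ZMod.cast (a * ZMod.castHom (by norm_num : (2:ℕ) ∣ 4) (ZMod 2) b) : ZMod 4) := by
  revert a b; decide

/-- The injection `Z_2 → Z_4` as additive hom. -/
def iotHom : ZMod 2 →+ ZMod 4 where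
  toFun a := 2 * ZMod.cast a
  map_zero' := by decide
  map_add' := by decide

lemma iotHom_inj : Function.Injective iotHom := by decide

/-- If `C` is a self-orthogonal code of length `n` over `Z_4`, then its residue
code `π(C)` is doubly even and `π(C) ⊆ ι⁻¹(C) ⊆ π(C)^⊥`. -/
theorem stmt0 (n : ℕ) (hn : 0 < n) (C : Submodule (ZMod 4) (Fin n → ZMod 4))
    (hC : sorth (C : Set (Fin n → ZMod 4))) :
    doublyEven (res4 '' (C : Set (Fin n → ZMod 4))) ∧
      res4 '' (C : Set (Fin n → ZMod 4)) ⊆ iot4 ⁻¹' (C : Set (Fin n → ZMod 4)) ∧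
      iot4 ⁻¹' (C : Set (Fin n → ZMod 4)) ⊆ dualSet (res4 '' (C : Set (Fin n → ZMod 4))) := by
  constructor
  · rintro y ⟨x, hx, rfl⟩
    have h0 : ∑ i, x i * x i = 0 := hC x hx x hx
    have h1 : (((Finset.univ.filter fun i => res4 x i ≠ 0).card : ℕ) : ZMod 4) = 0 := by
      rw [← h0]
      rw [Finset.sum_congr rfl fun i _ => sq_eq_ind (x i), Finset.sum_boole]
      rfl
    exact (ZMod.natCast_eq_zero_iff _ 4).mp h1
  constructor
  · rintro y ⟨x, hx, rfl⟩
    have : iot4 (res4 x) = (2 : ZMod 4) • x := by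
      funext i
      simp only [iot4, res4, Pi.smul_apply, smul_eq_mul]
      exact two_mul_cast_res (x i)
    simp only [Set.mem_preimage, this]
    exact C.smul_mem _ hx
  · rintro v hv y ⟨x, hx, rfl⟩
    have h0 : ∑ i, iot4 v i * x i = 0 := hC _ hv x hx
    have h1 : ∑ i, iot4 v i * x i = iotHom (∑ i, v i * res4 x i) := by
      rw [map_sum]
      exact Finset.sum_congr rfl fun i _ => mul_cast_eq (v i) (x i)
    exact iotHom_inj (by rw [← h1, h0]; exact (map_zero iotHom).symm)


end Paper
end

section
/- Let K be a field, m ≤ n positive integers, and A ∈ M_{m×n}(K) a matrix of rank m. Consider the map Ψ_A : M_{m×n}(K) → M_m(K) given by Ψ_A(N) = AN^t + NA^t. If char K ≠ 2, then the image of Ψ_A is exactly the set Sym_m(K) of symmetric m×m matrices over K; if char K = 2, then the image of Ψ_A is exactly the set Alt_m(K) of symmetric m×m matrices over K with zero diagonal. -/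
open scoped BigOperators

namespace Paper

lemma exists_rightInv {K : Type} [Field K] {m n : ℕ} (A : Matrix (Fin m) (Fin n) K)
    (hA : A.rank = m) : ∃ B : Matrix (Fin n) (Fin m) K, A * B = 1 := by
  have hsurj : Function.Surjective A.mulVecLin := by
    rw [← LinearMap.range_eq_top]
    apply Submodule.eq_top_of_finrank_eq
    rw [Matrix.rank] at hA
    simp [hA]
  refine ⟨Matrix.of fun j i => Function.surjInv hsurj (Pi.single i 1) j, ?_⟩
  ext k i
  have := congrFun (Function.surjInv_eq hsurj (Pi.single i 1)) k
  simp only [Matrix.mulVecLin_apply, Matrix.mulVec, dotProduct] at this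
  simp [Matrix.mul_apply, Matrix.one_apply, this, Pi.single_apply, eq_comm]


/-- the image of `Ψ_A(N) = ANᵗ + NAᵗ` is `Sym_m(K)` in characteristic `≠ 2`,
and the alternating matrices (symmetric with zero diagonal) in characteristic `2`. -/
theorem stmt1 (K : Type) [Field K] (m n : ℕ) (hm : 0 < m) (hmn : m ≤ n)
    (A : Matrix (Fin m) (Fin n) K) (hA : A.rank = m) :
    (ringChar K ≠ 2 →
      Set.range (fun N : Matrix (Fin m) (Fin n) K => A * N.transpose + N * A.transpose)
        = {S : Matrix (Fin m) (Fin m) K | S.IsSymm}) ∧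
    (ringChar K = 2 →
      Set.range (fun N : Matrix (Fin m) (Fin n) K => A * N.transpose + N * A.transpose)
        = {S : Matrix (Fin m) (Fin m) K | S.IsSymm ∧ ∀ i, S i i = 0}) := by
  obtain ⟨B, hB⟩ := exists_rightInv A hA
  have hsymm : ∀ N : Matrix (Fin m) (Fin n) K,
      (A * N.transpose + N * A.transpose).IsSymm := by
    intro N
    unfold Matrix.IsSymm
    rw [Matrix.transpose_add, Matrix.transpose_mul, Matrix.transpose_mul,
      Matrix.transpose_transpose, Matrix.transpose_transpose, add_comm]
  constructor
  · intro hchar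
    have h2 : (2 : K) ≠ 0 := Ring.two_ne_zero hchar
    ext S
    simp only [Set.mem_range, Set.mem_setOf_eq]
    constructor
    · rintro ⟨N, rfl⟩; exact hsymm N
    · intro hS
      refine ⟨(2 : K)⁻¹ • (S * B.transpose), ?_⟩
      have hT : ((2:K)⁻¹ • (S * B.transpose)).transpose = (2:K)⁻¹ • (B * S) := by
        rw [Matrix.transpose_smul, Matrix.transpose_mul, Matrix.transpose_transpose, hS]
      rw [hT, Matrix.mul_smul, Matrix.smul_mul, ← Matrix.mul_assoc, hB, Matrix.one_mul,
        Matrix.mul_assoc, ← Matrix.transpose_mul, hB, Matrix.transpose_one, Matrix.mul_one,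
        ← smul_add]
      rw [← two_smul K S, smul_smul, inv_mul_cancel₀ h2, one_smul]
  · intro hchar
    haveI : CharP K 2 := ringChar.eq_iff.mp hchar
    ext S
    simp only [Set.mem_range, Set.mem_setOf_eq]
    constructor
    · rintro ⟨N, rfl⟩
      refine ⟨hsymm N, fun i => ?_⟩
      simp only [Matrix.add_apply, Matrix.mul_apply, Matrix.transpose_apply]
      rw [← Finset.sum_add_distrib]
      apply Finset.sum_eq_zero
      intro j _
      rw [mul_comm]
      exact CharTwo.add_self_eq_zero _
    · rintro ⟨hS, hdiag⟩
      set L : Matrix (Fin m) (Fin m) K := Matrix.of fun i j => if j < i then S i j else 0 with hL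
      refine ⟨L * B.transpose, ?_⟩
      have hT : (L * B.transpose).transpose = B * L.transpose := by
        rw [Matrix.transpose_mul, Matrix.transpose_transpose]
      rw [hT, ← Matrix.mul_assoc, hB, Matrix.one_mul, Matrix.mul_assoc,
        ← Matrix.transpose_mul, hB, Matrix.transpose_one, Matrix.mul_one]
      ext i j
      simp only [Matrix.add_apply, Matrix.transpose_apply, hL, Matrix.of_apply]
      rcases lt_trichotomy i j with h | h | h
      · simp [h, not_lt.mpr h.le, ← Matrix.IsSymm.apply hS j i]
      · simp [h, hdiag j]
      · simp [h, not_lt.mpr h.le]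


end Paper
end

section
/- Let K be a field of characteristic 2, m ≤ n positive integers, and A ∈ M_{m×n}(K) a matrix of rank m. Then the map Φ_A : M_{m×n}(K) → Sym_m(K) given by Φ_A(N) = AN^t + NA^t + Diag(AN^t) is surjective onto the set Sym_m(K) of symmetric m×m matrices over K. -/
/-! If `A B = 1`, then `N = C Bᵀ` gives `Φ_A(N) = Cᵀ + C + Diag(C)`. In characteristic `2`, taking for `C`
the lower triangle of a symmetric `S` (diagonal included) makes this `S`: off the diagonal exactly one of
`C, Cᵀ` contributes, and on it `S i i` is counted three times. A right inverse `B` exists because `A` has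
full row rank. -/

open scoped BigOperators

namespace Paper

open Matrix

theorem _root_.Matrix.exists_mul_eq_one_of_rank_eq_card {m n K : Type*} [Fintype m] [DecidableEq m]
    [Fintype n] [Field K] {A : Matrix m n K} (hA : A.rank = Fintype.card m) :
    ∃ B : Matrix n m K, A * B = 1 := by
  refine mulVec_surjective_iff_exists_right_inverse.1 ?_
  rw [← coe_mulVecLin, ← LinearMap.range_eq_top]
  exact Submodule.eq_top_of_finrank_eq (by rw [← rank, hA, Module.finrank_fintype_fun_eq_card])

section

variable {m n R : Type*} [Fintype n] [DecidableEq m] [CommRing R]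

def phi (A N : Matrix m n R) : Matrix m m R :=
  A * Nᵀ + N * Aᵀ + diagonal fun i => (A * Nᵀ) i i

theorem phi_isSymm (A N : Matrix m n R) : (phi A N).IsSymm := by
  rw [IsSymm, phi, transpose_add, transpose_add, transpose_mul, transpose_mul, transpose_transpose,
    transpose_transpose, diagonal_transpose]
  abel

theorem phi_mul_transpose_of_mul_eq_one [Fintype m] {A : Matrix m n R} {B : Matrix n m R}
    (hAB : A * B = 1) (C : Matrix m m R) :
    phi A (C * Bᵀ) = Cᵀ + C + diagonal fun i => C i i := by
  have hleft : A * (C * Bᵀ)ᵀ = Cᵀ := by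
    rw [transpose_mul, transpose_transpose, ← Matrix.mul_assoc, hAB, Matrix.one_mul]
  have hright : C * Bᵀ * Aᵀ = C := by
    rw [Matrix.mul_assoc, ← transpose_mul, hAB, transpose_one, Matrix.mul_one]
  rw [phi, hleft, hright]
  rfl

end

def lowerPart {m R : Type*} [LinearOrder m] [Zero R] (S : Matrix m m R) : Matrix m m R :=
  Matrix.of fun i j => if j ≤ i then S i j else 0

theorem lowerPart_transpose_add_self_add_diagonal {m R : Type*} [LinearOrder m] [Ring R]
    [CharP R 2] {S : Matrix m m R} (hS : S.IsSymm) :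
    (lowerPart S)ᵀ + lowerPart S + (diagonal fun i => lowerPart S i i) = S := by
  ext i j
  rcases lt_trichotomy i j with hij | rfl | hij
  · simp [lowerPart, hij.le, hij.not_ge, hij.ne, hS.apply j i]
  · simp [lowerPart, CharTwo.add_self_eq_zero]
  · simp [lowerPart, hij.le, hij.not_ge, hij.ne']

theorem stmt2_general (K : Type) [Field K] (hchar : ringChar K = 2) (m n : ℕ)
    (A : Matrix (Fin m) (Fin n) K) (hA : A.rank = m) :
    Set.range (fun N : Matrix (Fin m) (Fin n) K =>
        A * N.transpose + N * A.transpose + Matrix.diagonal (fun i => (A * N.transpose) i i))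
      = {S : Matrix (Fin m) (Fin m) K | S.IsSymm} := by
  have : CharP K 2 := ringChar.of_eq hchar
  obtain ⟨B, hAB⟩ := Matrix.exists_mul_eq_one_of_rank_eq_card (A := A) (by simpa using hA)
  ext S
  constructor
  · rintro ⟨N, rfl⟩
    exact phi_isSymm A N
  · intro hS
    refine ⟨lowerPart S * Bᵀ, ?_⟩
    change phi A _ = S
    rw [phi_mul_transpose_of_mul_eq_one hAB, lowerPart_transpose_add_self_add_diagonal hS]

/-- in characteristic `2`, the map
`Φ_A(N) = ANᵗ + NAᵗ + Diag(ANᵗ)` is surjective onto `Sym_m(K)`. -/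
theorem stmt2 (K : Type) [Field K] (hchar : ringChar K = 2) (m n : ℕ) (hm : 0 < m) (hmn : m ≤ n)
    (A : Matrix (Fin m) (Fin n) K) (hA : A.rank = m) :
    Set.range (fun N : Matrix (Fin m) (Fin n) K =>
        A * N.transpose + N * A.transpose + Matrix.diagonal (fun i => (A * N.transpose) i i))
      = {S : Matrix (Fin m) (Fin m) K | S.IsSymm} :=
  stmt2_general K hchar m n A hA

end Paper
end

section
/- Let K be a field of characteristic 2, m ≤ n positive integers, and A ∈ M_{m×n}(K) a matrix of rank m such that the all-ones vector 𝟏 ∈ K^n does not belong to the row space of A. Then the map Φ_A ⊕ α : M_{m×n}(K) → Sym_m(K) ⊕ K^m given by N ↦ (AN^t + NA^t + Diag(AN^t), 𝟏N^t) is surjective. -/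
open scoped BigOperators

/-! Let `T` be the lower triangle of `S`, diagonal included. For symmetric `S` in characteristic 2,
`S = T + Tᵀ + Diag(T)`, the diagonal being counted three times. It therefore suffices to find `N`
with `A Nᵀ = T` and prescribed row sums, that is, to solve `B Nᵀ = [w; T]` where `B` is `A` with
the all-ones row adjoined. The hypotheses say exactly that the rows of `B` are independent, so
`B` defines a surjective map and the system is solvable. -/

namespace Matrix

open scoped Matrix

variable {K m n κ : Type*} [Field K] [Fintype m] [Fintype n]

theorem linearIndependent_row_of_rank_eq_card {A : Matrix m n K} (h : A.rank = Fintype.card m) :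
    LinearIndependent K A.row := by
  rw [linearIndependent_iff_card_eq_finrank_span, Set.finrank, ← rank_eq_finrank_span_row, h]

theorem mulVec_surjective_of_linearIndependent_row {A : Matrix m n K}
    (h : LinearIndependent K A.row) : Function.Surjective A.mulVec := by
  change Function.Surjective A.mulVecLin
  rw [← LinearMap.range_eq_top]
  apply Submodule.eq_top_of_finrank_eq
  rw [← rank, h.rank_matrix, Module.finrank_fintype_fun_eq_card]

theorem exists_mul_transpose_eq_of_linearIndependent_row {A : Matrix m n K}
    (h : LinearIndependent K A.row) (T : Matrix m κ K) : ∃ N : Matrix κ n K, A * Nᵀ = T := by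
  choose N hN using fun k => mulVec_surjective_of_linearIndependent_row h (Tᵀ k)
  exact ⟨N, ext fun i k => congrFun (hN k) i⟩

theorem exists_mul_transpose_eq_and_mulVec_one_eq {A : Matrix m n K}
    (hA : LinearIndependent K A.row) (hone : (fun _ => (1 : K)) ∉ Submodule.span K (Set.range A.row))
    (T : Matrix m κ K) (w : κ → K) : ∃ N : Matrix κ n K, A * Nᵀ = T ∧ N *ᵥ (fun _ => 1) = w := by
  let B : Matrix (Option m) n K := of fun o => Option.casesOn' o (fun _ => 1) A.row
  let T' : Matrix (Option m) κ K := of fun o => Option.casesOn' o w T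
  obtain ⟨N, hN⟩ := exists_mul_transpose_eq_of_linearIndependent_row (hA.option hone) T'
  refine ⟨N, ext fun i k => ?_, funext fun k => ?_⟩
  · exact congrFun₂ hN (some i) k
  · calc (N *ᵥ fun _ => 1) k = (B * Nᵀ) none k := by simp [B, mulVec, dotProduct, mul_apply]
      _ = w k := congrFun₂ hN none k

def lowerTriangle {R ι : Type*} [Zero R] [LinearOrder ι] (S : Matrix ι ι R) : Matrix ι ι R :=
  of fun i j => if j ≤ i then S i j else 0

theorem lowerTriangle_add_transpose_add_diagonal {R ι : Type*} [Ring R] [CharP R 2]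
    [LinearOrder ι] {S : Matrix ι ι R} (hS : S.IsSymm) :
    S.lowerTriangle + S.lowerTriangleᵀ + diagonal (fun i => S.lowerTriangle i i) = S := by
  ext i j
  rcases lt_trichotomy i j with h | rfl | h
  · simp [lowerTriangle, h.ne, h.le, not_le.mpr h, hS.apply]
  · simp [lowerTriangle, CharTwo.add_self_eq_zero]
  · simp [lowerTriangle, h.ne', h.le, not_le.mpr h]

end Matrix

namespace Paper

open Matrix in
theorem stmt3_general (K : Type) [Field K] (hchar : ringChar K = 2) (m n : ℕ)
    (A : Matrix (Fin m) (Fin n) K) (hA : A.rank = m)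
    (hone : (fun _ => (1 : K)) ∉ Submodule.span K (Set.range fun i => A i)) :
    ∀ S : Matrix (Fin m) (Fin m) K, S.IsSymm → ∀ w : Fin m → K,
      ∃ N : Matrix (Fin m) (Fin n) K,
        A * N.transpose + N * A.transpose + Matrix.diagonal (fun i => (A * N.transpose) i i) = S ∧
        (fun i => ∑ j, N i j) = w := by
  have : CharP K 2 := ringChar.eq_iff.mp hchar
  intro S hS w
  have hrows : LinearIndependent K A.row :=
    linearIndependent_row_of_rank_eq_card (by rw [hA, Fintype.card_fin])
  obtain ⟨N, hT, hw⟩ := exists_mul_transpose_eq_and_mulVec_one_eq hrows hone S.lowerTriangle w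
  refine ⟨N, ?_, by simpa [funext_iff, mulVec, dotProduct] using hw⟩
  rw [← transpose_transpose N, ← transpose_mul, transpose_transpose, hT]
  exact lowerTriangle_add_transpose_add_diagonal hS

/-- in characteristic `2`, if `A` has rank `m` and the all-ones vector is not in
the row space of `A`, then `N ↦ (ANᵗ + NAᵗ + Diag(ANᵗ), 𝟏Nᵗ)` is surjective onto
`Sym_m(K) ⊕ K^m`. -/
theorem stmt3 (K : Type) [Field K] (hchar : ringChar K = 2) (m n : ℕ) (hm : 0 < m) (hmn : m ≤ n)
    (A : Matrix (Fin m) (Fin n) K) (hA : A.rank = m)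
    (hone : (fun _ => (1 : K)) ∉ Submodule.span K (Set.range fun i => A i)) :
    ∀ S : Matrix (Fin m) (Fin m) K, S.IsSymm → ∀ w : Fin m → K,
      ∃ N : Matrix (Fin m) (Fin n) K,
        A * N.transpose + N * A.transpose + Matrix.diagonal (fun i => (A * N.transpose) i i) = S ∧
        (fun i => ∑ j, N i j) = w :=
  stmt3_general K hchar m n A hA hone

end Paper
end

section
/- Let p be a prime, n a positive integer, and let A ∈ M_{k_1×(n−k_1)}(Z), B ∈ M_{k_2×(n−k_1)}(Z). Let C_1 be the code of length n over Z_p generated by the rows of [I_{k_1} | A], and C_2 the code over Z_p generated by the rows of the block matrix with rows [I_{k_1} | A] and [0 | B], and assume dim C_1 = k_1 and dim C_2 = k_1 + k_2. If C is a code of length n over Z_{p^2} satisfying π(C) = C_1 and ι^{-1}(C) = C_2, then there exists a matrix N ∈ M_{k_1×(n−k_1)}(Z) such that C is generated over Z_{p^2} by the rows of the block matrix with rows [I_{k_1} | A + pN] and [0 | pB]. Moreover, if k_2 = 0 (i.e., π(C) = ι^{-1}(C) = C_1), then such a matrix N is unique modulo p. -/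
open scoped BigOperators

namespace Paper

/-- The code over `Z_{p^2}` with generator matrix `[[I, A + pN], [0, pB]]`. -/
def genSO (p k1 k2 r : ℕ) (A : Matrix (Fin k1) (Fin r) ℤ) (B : Matrix (Fin k2) (Fin r) ℤ)
    (N : Matrix (Fin k1) (Fin r) ℤ) :
    Submodule (ZMod (p ^ 2)) ((Fin k1 ⊕ Fin r) → ZMod (p ^ 2)) :=
  intRowSpan (p ^ 2) (Matrix.fromRows
    (Matrix.fromCols (1 : Matrix (Fin k1) (Fin k1) ℤ) (A + (p : ℤ) • N))
    (Matrix.fromCols (0 : Matrix (Fin k2) (Fin k1) ℤ) ((p : ℤ) • B)))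

/-!
Multiplication by `p` on `Z_{p²}` factors through the reduction mod `p`, so `ι v = p • x` for
every lift `x` of `v`. Hence a code `D ≤ C` whose residue and torsion codes contain those of `C`
equals `C`: every `x ∈ C` agrees mod `p` with some `y ∈ D`, and `x - y ∈ ι(ι⁻¹ C) ⊆ D`.

For existence, lift each row of `[I | A]` to some `c ∈ C`; then `c` is the integer row plus `ι w`,
and subtracting `ι` of the combination of the rows of `[I | A]` with coefficients `w` on the
identity block leaves a row `[I | A + pN]` of `C`. These rows together with `ι [0 | B] = [0 | pB]`
generate a subcode with the residue and torsion codes of `C`. For uniqueness when `k₂ = 0`, the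
`i`-th rows for `N` and `N'` differ by a codeword vanishing on the identity block, hence by `0`,
so `p (N - N') ≡ 0 mod p²`.
-/

theorem intCast_eq_of_natCast_mul_eq {p : ℕ} [NeZero p] {a b : ℤ}
    (h : ((p * a : ℤ) : ZMod (p ^ 2)) = ((p * b : ℤ) : ZMod (p ^ 2))) : (a : ZMod p) = b := by
  have hp : (p : ℤ) ≠ 0 := by exact_mod_cast NeZero.ne p
  rw [ZMod.intCast_eq_intCast_iff_dvd_sub] at h ⊢
  rwa [← mul_sub, Nat.cast_pow, pow_two, mul_dvd_mul_iff_left hp] at h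

theorem exists_eq_natCast_mul_of_castHom_eq_zero {p : ℕ} [NeZero p] {x : ZMod (p ^ 2)}
    (h : ZMod.castHom (dvd_pow_self p two_ne_zero) (ZMod p) x = 0) : ∃ y, x = p * y := by
  rw [← ZMod.natCast_zmod_val x, map_natCast, ZMod.natCast_eq_zero_iff] at h
  obtain ⟨m, hm⟩ := h
  exact ⟨m, by rw [← ZMod.natCast_zmod_val x, hm, Nat.cast_mul]⟩

instance {m n : ℕ} (h : m ∣ n) : RingHomSurjective (ZMod.castHom h (ZMod m)) :=
  ⟨ZMod.castHom_surjective h⟩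

def intRow (q : ℕ) {κ ι : Type} (G : Matrix κ ι ℤ) (i : κ) : ι → ZMod q :=
  fun c => G i c

@[simp]
theorem intRow_apply {q : ℕ} {κ ι : Type} (G : Matrix κ ι ℤ) (i : κ) (c : ι) :
    intRow q G i c = G i c :=
  rfl

section ResidueTorsion

variable {p : ℕ} [Fact p.Prime] {ι : Type}

variable (p ι) in
def resₛₗ :
    (ι → ZMod (p ^ 2)) →ₛₗ[ZMod.castHom (dvd_pow_self p two_ne_zero) (ZMod p)] (ι → ZMod p) where
  toFun := res p
  map_add' _ _ := funext fun _ => map_add _ _ _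
  map_smul' _ _ := funext fun _ => map_mul _ _ _

theorem res_add (x y : ι → ZMod (p ^ 2)) : res p (x + y) = res p x + res p y :=
  map_add (resₛₗ p ι) x y

theorem res_sub (x y : ι → ZMod (p ^ 2)) : res p (x - y) = res p x - res p y :=
  map_sub (resₛₗ p ι) x y

theorem res_smul (a : ZMod (p ^ 2)) (x : ι → ZMod (p ^ 2)) :
    res p (a • x) = ZMod.castHom (dvd_pow_self p two_ne_zero) (ZMod p) a • res p x :=
  map_smulₛₗ (resₛₗ p ι) a x

theorem res_intRow {κ : Type} (G : Matrix κ ι ℤ) (i : κ) :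
    res p (intRow (p ^ 2) G i) = intRow p G i := by
  funext c
  simp [res, intRow]

theorem exists_eq_smul_of_res_eq_zero {x : ι → ZMod (p ^ 2)} (h : res p x = 0) :
    ∃ y, x = (p : ZMod (p ^ 2)) • y := by
  choose y hy using fun c => exists_eq_natCast_mul_of_castHom_eq_zero (congrFun h c)
  exact ⟨y, funext hy⟩

theorem natCast_smul_eq_of_res_eq {x y : ι → ZMod (p ^ 2)} (h : res p x = res p y) :
    (p : ZMod (p ^ 2)) • x = (p : ZMod (p ^ 2)) • y := by
  obtain ⟨z, hz⟩ := exists_eq_smul_of_res_eq_zero (x := x - y)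
    (by rw [res_sub, h, sub_self])
  rw [← sub_eq_zero, ← smul_sub, hz, smul_smul, ← Nat.cast_mul, ← pow_two, ZMod.natCast_self,
    zero_smul]

theorem res_cast (v : ι → ZMod p) : res p (fun c => (ZMod.cast (v c) : ZMod (p ^ 2))) = v := by
  funext c
  simp [res]

theorem iot_eq_smul_of_res_eq {v : ι → ZMod p} {x : ι → ZMod (p ^ 2)} (h : res p x = v) :
    iot p v = (p : ZMod (p ^ 2)) • x :=
  natCast_smul_eq_of_res_eq ((res_cast v).trans h.symm)

theorem iot_add (v w : ι → ZMod p) : iot p (v + w) = iot p v + iot p w := by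
  rw [iot_eq_smul_of_res_eq (res_cast v), iot_eq_smul_of_res_eq (res_cast w), ← smul_add]
  refine iot_eq_smul_of_res_eq ?_
  rw [res_add, res_cast, res_cast]

theorem iot_smul (s : ZMod p) (v : ι → ZMod p) :
    iot p (s • v) = (ZMod.cast s : ZMod (p ^ 2)) • iot p v := by
  rw [iot_eq_smul_of_res_eq (res_cast v), smul_comm]
  refine iot_eq_smul_of_res_eq ?_
  rw [res_smul, res_cast, ZMod.castHom_apply,
    ZMod.cast_cast_zmod_of_le (Nat.le_self_pow two_ne_zero p)]

theorem iot_sub (v w : ι → ZMod p) : iot p (v - w) = iot p v - iot p w := by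
  rw [eq_sub_iff_add_eq, ← iot_add, sub_add_cancel]

theorem eq_iot_of_res_eq_zero {x : ι → ZMod (p ^ 2)} (h : res p x = 0) : ∃ w, iot p w = x := by
  obtain ⟨y, rfl⟩ := exists_eq_smul_of_res_eq_zero h
  exact ⟨res p y, iot_eq_smul_of_res_eq rfl⟩

variable (p) in
def residue (C : Submodule (ZMod (p ^ 2)) (ι → ZMod (p ^ 2))) :
    Submodule (ZMod p) (ι → ZMod p) :=
  C.map (resₛₗ p ι)

variable (p) in
def torsion (C : Submodule (ZMod (p ^ 2)) (ι → ZMod (p ^ 2))) :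
    Submodule (ZMod p) (ι → ZMod p) where
  carrier := iot p ⁻¹' C
  add_mem' {v w} hv hw := by simpa [iot_add] using C.add_mem hv hw
  zero_mem' := by simp [iot_eq_smul_of_res_eq (x := 0) (map_zero (resₛₗ p ι))]
  smul_mem' s v hv := by simpa [iot_smul] using C.smul_mem _ hv

theorem eq_of_le_of_residue_le_of_torsion_le {C D : Submodule (ZMod (p ^ 2)) (ι → ZMod (p ^ 2))}
    (hDC : D ≤ C) (hres : residue p C ≤ residue p D) (htor : torsion p C ≤ torsion p D) :
    D = C := by
  refine le_antisymm hDC fun x hx => ?_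
  obtain ⟨y, hy, hyx⟩ := hres ⟨x, hx, rfl⟩
  obtain ⟨u, hu⟩ := eq_iot_of_res_eq_zero (x := x - y)
    (by rw [res_sub]; exact sub_eq_zero.2 hyx.symm)
  have hu' : u ∈ torsion p D := htor (show iot p u ∈ C from hu ▸ sub_mem hx (hDC hy))
  simpa [hu] using D.add_mem hu' hy

end ResidueTorsion

section RowSpan

open Matrix

variable {q : ℕ} {κ κ' ι : Type}

theorem intRow_mem_intRowSpan (G : Matrix κ ι ℤ) (i : κ) : intRow q G i ∈ intRowSpan q G :=
  Submodule.subset_span ⟨i, rfl⟩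

theorem intRowSpan_le_iff {G : Matrix κ ι ℤ} {S : Submodule (ZMod q) (ι → ZMod q)} :
    intRowSpan q G ≤ S ↔ ∀ i, intRow q G i ∈ S :=
  Submodule.span_le.trans Set.range_subset_iff

theorem intRowSpan_fromRows (G : Matrix κ ι ℤ) (H : Matrix κ' ι ℤ) :
    intRowSpan q (fromRows G H) = intRowSpan q G ⊔ intRowSpan q H := by
  rw [intRowSpan, intRowSpan, intRowSpan, ← Submodule.span_union, ← Set.Sum.elim_range]
  congr 2
  ext (i | i) <;> rfl

theorem intRowSpan_of_isEmpty [IsEmpty κ] (G : Matrix κ ι ℤ) : intRowSpan q G = ⊥ := by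
  rw [intRowSpan, Set.range_eq_empty, Submodule.span_empty]

variable [Fintype κ] [DecidableEq κ]

theorem sum_smul_intRow_fromCols_one_inl (A : Matrix κ ι ℤ) (a : κ → ZMod q) (i : κ) :
    (∑ j, a j • intRow q (fromCols 1 A) j) (Sum.inl i) = a i := by
  simp [Finset.sum_apply, one_apply]

theorem eq_zero_of_mem_intRowSpan_fromCols_one {A : Matrix κ ι ℤ} {x : κ ⊕ ι → ZMod q}
    (hx : x ∈ intRowSpan q (fromCols 1 A)) (hx0 : ∀ i, x (Sum.inl i) = 0) : x = 0 := by
  obtain ⟨a, rfl⟩ := Submodule.mem_span_range_iff_exists_fun (ZMod q) |>.1 hx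
  obtain rfl : a = 0 := funext fun i => (sum_smul_intRow_fromCols_one_inl A a i).symm.trans (hx0 i)
  simp

end RowSpan

section Existence

open Matrix

variable {p : ℕ} [Fact p.Prime]

theorem exists_intRow_add_iot_mem {κ ι : Type} [Fintype κ] [DecidableEq κ] {A : Matrix κ ι ℤ}
    {C : Submodule (ZMod (p ^ 2)) (κ ⊕ ι → ZMod (p ^ 2))}
    (hres : intRowSpan p (fromCols 1 A) ≤ residue p C)
    (htor : intRowSpan p (fromCols 1 A) ≤ torsion p C) (i : κ) :
    ∃ u : ι → ZMod p, intRow (p ^ 2) (fromCols 1 A) i + iot p (Sum.elim 0 u) ∈ C := by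
  obtain ⟨x, hx, hxres⟩ : intRow p (fromCols (1 : Matrix κ κ ℤ) A) i ∈ residue p C :=
    hres (intRow_mem_intRowSpan _ i)
  obtain ⟨w, hw⟩ :=
    eq_iot_of_res_eq_zero (x := x - intRow (p ^ 2) (fromCols (1 : Matrix κ κ ℤ) A) i)
      (by rw [res_sub, res_intRow]; exact sub_eq_zero.2 hxres)
  -- `t` agrees with `w` on the identity block, so subtracting `ι t ∈ C` clears those coordinates.
  set t := ∑ j, w (Sum.inl j) • intRow p (fromCols (1 : Matrix κ κ ℤ) A) j
  have ht : t ∈ torsion p C :=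
    htor (Submodule.sum_mem _ fun j _ => Submodule.smul_mem _ _ (intRow_mem_intRowSpan _ j))
  refine ⟨fun j => (w - t) (Sum.inr j), ?_⟩
  have hwt : Sum.elim (0 : κ → ZMod p) (fun j => (w - t) (Sum.inr j)) = w - t := by
    ext (j | j)
    · simp only [Sum.elim_inl, Pi.zero_apply, Pi.sub_apply, t, sum_smul_intRow_fromCols_one_inl,
        sub_self]
    · rfl
  rw [hwt, iot_sub, hw]
  convert C.sub_mem hx ht using 1
  abel

theorem exists_intRowSpan_fromCols_le {κ ι : Type} [Fintype κ] [DecidableEq κ]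
    {A : Matrix κ ι ℤ} {C : Submodule (ZMod (p ^ 2)) (κ ⊕ ι → ZMod (p ^ 2))}
    (hres : intRowSpan p (fromCols 1 A) ≤ residue p C)
    (htor : intRowSpan p (fromCols 1 A) ≤ torsion p C) :
    ∃ N : Matrix κ ι ℤ, intRowSpan (p ^ 2) (fromCols 1 (A + (p : ℤ) • N)) ≤ C := by
  choose u hu using exists_intRow_add_iot_mem hres htor
  set N : Matrix κ ι ℤ := of fun i j => ((u i j).val : ℤ)
  refine ⟨N, intRowSpan_le_iff.2 fun i => ?_⟩
  convert hu i using 1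
  rw [iot_eq_smul_of_res_eq (x := intRow (p ^ 2) (fromCols (0 : Matrix κ κ ℤ) N) i)
    (by rw [res_intRow]; ext (j | j) <;> simp [N])]
  ext (j | j) <;> simp [N]

theorem res_intRow_fromCols_one_add_smul {κ ι : Type} [DecidableEq κ] (A N : Matrix κ ι ℤ)
    (i : κ) : res p (intRow (p ^ 2) (fromCols (1 : Matrix κ κ ℤ) (A + (p : ℤ) • N)) i) =
      intRow p (fromCols (1 : Matrix κ κ ℤ) A) i := by
  rw [res_intRow]
  ext (j | j) <;> simp

theorem iot_intRow_fromCols_zero {κ κ' ι : Type} (B : Matrix κ' ι ℤ) (j : κ') :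
    iot p (intRow p (fromCols (0 : Matrix κ' κ ℤ) B) j) =
      intRow (p ^ 2) (fromCols (0 : Matrix κ' κ ℤ) ((p : ℤ) • B)) j := by
  rw [iot_eq_smul_of_res_eq (res_intRow (p := p) _ _)]
  ext (c | c) <;> simp

theorem exists_eq_genSO {k1 k2 r : ℕ} {A : Matrix (Fin k1) (Fin r) ℤ}
    {B : Matrix (Fin k2) (Fin r) ℤ} {C : Submodule (ZMod (p ^ 2)) (Fin k1 ⊕ Fin r → ZMod (p ^ 2))}
    (hres : residue p C = intRowSpan p (fromCols 1 A))
    (htor : torsion p C = intRowSpan p (fromRows (fromCols 1 A) (fromCols 0 B))) :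
    ∃ N, C = genSO p k1 k2 r A B N := by
  rw [intRowSpan_fromRows] at htor
  obtain ⟨N, hN⟩ := exists_intRowSpan_fromCols_le hres.ge (htor ▸ le_sup_left)
  have hBC : intRowSpan (p ^ 2) (fromCols (0 : Matrix (Fin k2) (Fin k1) ℤ) ((p : ℤ) • B)) ≤ C := by
    refine intRowSpan_le_iff.2 fun j => ?_
    rw [← iot_intRow_fromCols_zero]
    show _ ∈ torsion p C
    rw [htor]
    exact Submodule.mem_sup_right (intRow_mem_intRowSpan _ j)
  refine ⟨N, (eq_of_le_of_residue_le_of_torsion_le ?_ ?_ ?_).symm⟩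
  · rw [genSO, intRowSpan_fromRows]
    exact sup_le hN hBC
  · rw [hres, intRowSpan_le_iff]
    exact fun i => ⟨_, intRow_mem_intRowSpan _ (Sum.inl i), res_intRow_fromCols_one_add_smul A N i⟩
  · rw [htor, sup_le_iff, intRowSpan_le_iff, intRowSpan_le_iff]
    refine ⟨fun i => ?_, fun j => ?_⟩
    · show iot p _ ∈ genSO p k1 k2 r A B N
      rw [iot_eq_smul_of_res_eq (res_intRow_fromCols_one_add_smul A N i)]
      exact Submodule.smul_mem _ _ (intRow_mem_intRowSpan _ (Sum.inl i))
    · show iot p _ ∈ genSO p k1 k2 r A B N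
      rw [iot_intRow_fromCols_zero]
      exact intRow_mem_intRowSpan _ (Sum.inr j)

end Existence

section Uniqueness

open Matrix

variable {p k1 r : ℕ} {A : Matrix (Fin k1) (Fin r) ℤ} {B : Matrix (Fin 0) (Fin r) ℤ}

theorem genSO_zero (N : Matrix (Fin k1) (Fin r) ℤ) :
    genSO p k1 0 r A B N = intRowSpan (p ^ 2) (fromCols 1 (A + (p : ℤ) • N)) := by
  rw [genSO, intRowSpan_fromRows, intRowSpan_of_isEmpty (κ := Fin 0), sup_bot_eq]

theorem intCast_eq_of_genSO_eq [NeZero p] {N₁ N₂ : Matrix (Fin k1) (Fin r) ℤ}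
    (h : genSO p k1 0 r A B N₁ = genSO p k1 0 r A B N₂) (i : Fin k1) (j : Fin r) :
    (N₁ i j : ZMod p) = N₂ i j := by
  rw [genSO_zero, genSO_zero] at h
  set x := intRow (p ^ 2) (fromCols (1 : Matrix (Fin k1) (Fin k1) ℤ) (A + (p : ℤ) • N₁)) i -
    intRow (p ^ 2) (fromCols (1 : Matrix (Fin k1) (Fin k1) ℤ) (A + (p : ℤ) • N₂)) i
  have hx : x = 0 := by
    refine eq_zero_of_mem_intRowSpan_fromCols_one (sub_mem ?_ (intRow_mem_intRowSpan _ i)) ?_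
    · exact h ▸ intRow_mem_intRowSpan _ i
    · intro j
      simp [x]
  apply intCast_eq_of_natCast_mul_eq
  have hj := congrFun hx (Sum.inr j)
  simp only [x, Pi.sub_apply, intRow_apply, fromCols_apply_inr, Matrix.add_apply,
    Matrix.smul_apply, smul_eq_mul, Pi.zero_apply] at hj
  push_cast at hj ⊢
  linear_combination hj

end Uniqueness

theorem stmt4_general (p : ℕ) [Fact p.Prime] (k1 k2 r : ℕ)
    (A : Matrix (Fin k1) (Fin r) ℤ) (B : Matrix (Fin k2) (Fin r) ℤ)
    (C : Submodule (ZMod (p ^ 2)) ((Fin k1 ⊕ Fin r) → ZMod (p ^ 2)))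
    (hres : res p '' (C : Set ((Fin k1 ⊕ Fin r) → ZMod (p ^ 2))) =
      (intRowSpan p (Matrix.fromCols (1 : Matrix (Fin k1) (Fin k1) ℤ) A) :
        Set ((Fin k1 ⊕ Fin r) → ZMod p)))
    (htor : iot p ⁻¹' (C : Set ((Fin k1 ⊕ Fin r) → ZMod (p ^ 2))) =
      (intRowSpan p (Matrix.fromRows
        (Matrix.fromCols (1 : Matrix (Fin k1) (Fin k1) ℤ) A)
        (Matrix.fromCols (0 : Matrix (Fin k2) (Fin k1) ℤ) B)) :
        Set ((Fin k1 ⊕ Fin r) → ZMod p))) :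
    (∃ N : Matrix (Fin k1) (Fin r) ℤ, C = genSO p k1 k2 r A B N) ∧
    (k2 = 0 → ∀ N1 N2 : Matrix (Fin k1) (Fin r) ℤ,
      C = genSO p k1 k2 r A B N1 → C = genSO p k1 k2 r A B N2 →
      ∀ i j, ((N1 i j : ℤ) : ZMod p) = ((N2 i j : ℤ) : ZMod p)) := by
  refine ⟨exists_eq_genSO (SetLike.coe_injective hres) (SetLike.coe_injective htor), ?_⟩
  rintro rfl N1 N2 h1 h2
  exact intCast_eq_of_genSO_eq (h1.symm.trans h2)

/-- if `π(C) = C₁` (generated by `[I | A]`) and `ι⁻¹(C) = C₂` (generated by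
`[[I, A], [0, B]]`), then `C` is generated by `[[I, A + pN], [0, pB]]` for some integer matrix
`N`; if moreover `k₂ = 0`, such `N` is unique modulo `p`. -/
theorem stmt4 (p : ℕ) [Fact p.Prime] (n k1 k2 r : ℕ) (hn : 0 < n) (hnr : n = k1 + r)
    (A : Matrix (Fin k1) (Fin r) ℤ) (B : Matrix (Fin k2) (Fin r) ℤ)
    (hdim1 : Module.finrank (ZMod p)
      (intRowSpan p (Matrix.fromCols (1 : Matrix (Fin k1) (Fin k1) ℤ) A)) = k1)
    (hdim2 : Module.finrank (ZMod p)
      (intRowSpan p (Matrix.fromRows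
        (Matrix.fromCols (1 : Matrix (Fin k1) (Fin k1) ℤ) A)
        (Matrix.fromCols (0 : Matrix (Fin k2) (Fin k1) ℤ) B))) = k1 + k2)
    (C : Submodule (ZMod (p ^ 2)) ((Fin k1 ⊕ Fin r) → ZMod (p ^ 2)))
    (hres : res p '' (C : Set ((Fin k1 ⊕ Fin r) → ZMod (p ^ 2))) =
      (intRowSpan p (Matrix.fromCols (1 : Matrix (Fin k1) (Fin k1) ℤ) A) :
        Set ((Fin k1 ⊕ Fin r) → ZMod p)))
    (htor : iot p ⁻¹' (C : Set ((Fin k1 ⊕ Fin r) → ZMod (p ^ 2))) =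
      (intRowSpan p (Matrix.fromRows
        (Matrix.fromCols (1 : Matrix (Fin k1) (Fin k1) ℤ) A)
        (Matrix.fromCols (0 : Matrix (Fin k2) (Fin k1) ℤ) B)) :
        Set ((Fin k1 ⊕ Fin r) → ZMod p))) :
    (∃ N : Matrix (Fin k1) (Fin r) ℤ, C = genSO p k1 k2 r A B N) ∧
    (k2 = 0 → ∀ N1 N2 : Matrix (Fin k1) (Fin r) ℤ,
      C = genSO p k1 k2 r A B N1 → C = genSO p k1 k2 r A B N2 →
      ∀ i j, ((N1 i j : ℤ) : ZMod p) = ((N2 i j : ℤ) : ZMod p)) :=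
  stmt4_general p k1 k2 r A B C hres htor

end Paper
end

section
/- Let n be a positive integer divisible by 8 and 1 ≤ k_1 ≤ n/2. Let A ∈ M_{(k_1−1)×(n−k_1)}(Z) be a matrix with all entries 0 or 1 such that the binary code C_1 of length n generated by the rows of the block matrix with first row [1 | 𝟏 | 𝟏] and remaining rows [0 | I_{k_1−1} | A] is doubly even of dimension k_1 (in particular I_{k_1−1} + AA^t ≡ 0 (mod 2) and 𝟏 + 𝟏A^t ≡ 0 (mod 4)). Then the all-ones vector 𝟏 ∈ (Z_2)^{n−k_1} does not belong to the row space of A over Z_2. -/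
open scoped BigOperators

set_option maxHeartbeats 1000000

namespace Paper

/-- The integer generator matrix `[[1, 𝟏, 𝟏], [0, I, M]]`. -/
def genE (k r : ℕ) (M : Matrix (Fin k) (Fin r) ℤ) :
    Matrix (Unit ⊕ Fin k) (Unit ⊕ (Fin k ⊕ Fin r)) ℤ :=
  Matrix.fromBlocks (1 : Matrix Unit Unit ℤ) (Matrix.of fun _ _ => 1)
    (0 : Matrix (Fin k) Unit ℤ)
    (Matrix.fromCols (1 : Matrix (Fin k) (Fin k) ℤ) M)

/-! Modulo 2 the hypotheses say that the rows of `A` are orthonormal and of odd weight. If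
`𝟏 = c A`, pairing with row `i` gives `cᵢ = ⟨𝟏, row i⟩ = 1`, so `𝟏` is the sum of all rows of `A`.
Counting the ones of `A` by columns and by rows then gives `n - k₁ ≡ k₁ - 1 (mod 2)`, which is
impossible for even `n`. -/

open scoped Matrix

section OrthonormalRows

variable {R κ ι : Type*} [CommRing R] [Fintype κ] [DecidableEq κ] [Fintype ι] (B : Matrix κ ι R)

theorem eq_mulVec_of_vecMul_eq (hB : B * Bᵀ = 1) {c : κ → R} {v : ι → R} (h : c ᵥ* B = v) :
    c = B *ᵥ v := by
  rw [← h, ← Matrix.vecMul_transpose, Matrix.vecMul_vecMul, hB, Matrix.vecMul_one]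

theorem card_eq_of_one_mem_span_rows (hB : B * Bᵀ = 1) (hsum : B *ᵥ 1 = 1)
    (h : 1 ∈ Submodule.span R (Set.range B)) : (Fintype.card ι : R) = Fintype.card κ := by
  obtain ⟨c, hc⟩ : 1 ∈ LinearMap.range B.vecMulLinear := by rwa [range_vecMulLinear]
  rw [Matrix.vecMulLinear_apply] at hc
  have hc1 : c = 1 := by rw [eq_mulVec_of_vecMul_eq B hB hc, hsum]
  calc (Fintype.card ι : R) = (1 ᵥ* B) ⬝ᵥ 1 := by rw [← hc1, hc, one_dotProduct_one]
    _ = Fintype.card κ := by rw [← Matrix.dotProduct_mulVec, hsum, one_dotProduct_one]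

end OrthonormalRows

theorem intCast_zmod_two_eq_of_dvd_add {a z : ℤ} (h : 2 ∣ a + z) : (z : ZMod 2) = a := by
  rw [ZMod.intCast_eq_intCast_iff_dvd_sub]
  push_cast
  omega

theorem stmt9_general (n k1 : ℕ) (hn8 : 8 ∣ n) (hk1 : 1 ≤ k1) (hk : k1 ≤ n / 2)
    (A : Matrix (Fin (k1 - 1)) (Fin (n - k1)) ℤ)
    (h2 : ∀ i j, (2 : ℤ) ∣ ((1 + A * A.transpose : Matrix (Fin (k1 - 1)) (Fin (k1 - 1)) ℤ) i j))
    (h14 : ∀ i, (4 : ℤ) ∣ (1 + ∑ j, A i j)) :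
    (fun _ => (1 : ZMod 2)) ∉ Submodule.span (ZMod 2)
      (Set.range fun i => fun j : Fin (n - k1) => ((A i j : ℤ) : ZMod 2)) := by
  set B := A.map (Int.castRingHom (ZMod 2))
  have hB : B * Bᵀ = 1 := by
    rw [← Matrix.transpose_map, ← Matrix.map_mul]
    ext i j
    simpa [Matrix.one_apply, apply_ite] using intCast_zmod_two_eq_of_dvd_add (h2 i j)
  have hsum : B *ᵥ 1 = 1 := by
    ext i
    have := intCast_zmod_two_eq_of_dvd_add (dvd_trans (by norm_num) (h14 i))
    simpa [Matrix.mulVec, dotProduct_one, B] using this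
  intro hmem
  have hcard := card_eq_of_one_mem_span_rows B hB hsum hmem
  rw [Fintype.card_fin, Fintype.card_fin, ZMod.natCast_eq_natCast_iff'] at hcard
  omega

/-- if the binary code generated by `[[1, 𝟏, 𝟏], [0, I, A]]` is doubly even of
dimension `k₁` (where `8 ∣ n`, `1 ≤ k₁ ≤ n/2`, and `A` has `0,1` entries), then the all-ones
vector does not belong to the row space of `A` over `Z₂`. -/
theorem stmt9 (n k1 : ℕ) (hn8 : 8 ∣ n) (hn : 0 < n) (hk1 : 1 ≤ k1) (hk : k1 ≤ n / 2)
    (A : Matrix (Fin (k1 - 1)) (Fin (n - k1)) ℤ)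
    (hA01 : ∀ i j, A i j = 0 ∨ A i j = 1)
    (hde : doublyEven ((intRowSpan 2 (genE (k1 - 1) (n - k1) A) :
      Submodule (ZMod 2) ((Unit ⊕ (Fin (k1 - 1) ⊕ Fin (n - k1))) → ZMod 2)) :
      Set ((Unit ⊕ (Fin (k1 - 1) ⊕ Fin (n - k1))) → ZMod 2)))
    (hdim : Module.finrank (ZMod 2) (intRowSpan 2 (genE (k1 - 1) (n - k1) A) :
      Submodule (ZMod 2) ((Unit ⊕ (Fin (k1 - 1) ⊕ Fin (n - k1))) → ZMod 2)) = k1)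
    (h2 : ∀ i j, (2 : ℤ) ∣ ((1 + A * A.transpose : Matrix (Fin (k1 - 1)) (Fin (k1 - 1)) ℤ) i j))
    (h14 : ∀ i, (4 : ℤ) ∣ (1 + ∑ j, A i j)) :
    (fun _ => (1 : ZMod 2)) ∉ Submodule.span (ZMod 2)
      (Set.range fun i => fun j : Fin (n - k1) => ((A i j : ℤ) : ZMod 2)) :=
  stmt9_general n k1 hn8 hk1 hk A h2 h14

end Paper
end

section
/- Let n be a positive integer divisible by 8, 1 ≤ k_1 ≤ n/2, and let A ∈ M_{(k_1−1)×(n−k_1)}(Z) have all entries 0 or 1, with I_{k_1−1} + AA^t ≡ 0 (mod 2), diag(I_{k_1−1} + AA^t) ≡ 0 (mod 4), and 𝟏 + 𝟏A^t ≡ 0 (mod 4). For N ∈ M_{(k_1−1)×(n−k_1)}(Z), let C be the quaternary code of length n generated by the rows of the block matrix with first row [1 | 𝟏 | 𝟏] and remaining rows [0 | I_{k_1−1} | A + 2N]. Then C is even if and only if 𝟏N^t ≡ 0 (mod 2) and AN^t + NA^t + Diag(AN^t) ≡ (1/2)(I + AA^t) + (1/4)(I + Diag(AA^t)) (mod 2).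 -/
open scoped BigOperators

set_option maxHeartbeats 1000000

namespace Paper

/-! Lifting `x ∈ ZMod 4` to an integer `x̃`, the Euclidean weight of `x` is `x̃² mod 8`, so
`Q x = ∑ x̃ᵢ² ∈ ZMod 8` is a quadratic form with `Q (x + y) = Q x + Q y + 2 (x ⬝ᵥ y)`. A quaternary
code is therefore even iff `Q` vanishes on its generators and they are pairwise orthogonal over
`ZMod 4`; for the rows of an integer matrix `G` this reads `8 ∣ (G Gᵀ) u u` and `4 ∣ (G Gᵀ) u v`.
For `[[1, 𝟏, 𝟏], [0, I, M]]` the Gram matrix has blocks `n`, `1 + 𝟏 Mᵀ` and `I + M Mᵀ`, and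
expanding `M = A + 2N` turns these divisibilities into the two stated congruences. -/

open Matrix

section EuclideanWeight

def lift8 (x : ZMod 4) : ZMod 8 := x.val

def twiceLift8 : ZMod 4 →+ ZMod 8 :=
  AddMonoidHom.mk' (fun x => 2 * lift8 x) (by decide)

lemma twiceLift8_eq_zero_iff (x : ZMod 4) : twiceLift8 x = 0 ↔ x = 0 := by
  revert x; decide

lemma natCast_ewt (x : ZMod 4) : (ewt x : ZMod 8) = lift8 x ^ 2 := by
  revert x; decide

lemma lift8_add_sq (x y : ZMod 4) :
    lift8 (x + y) ^ 2 = lift8 x ^ 2 + lift8 y ^ 2 + twiceLift8 (x * y) := by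
  revert x y; decide

lemma lift8_mul_sq (c x : ZMod 4) : lift8 (c * x) ^ 2 = lift8 c ^ 2 * lift8 x ^ 2 := by
  revert c x; decide

lemma lift8_intCast (a : ℤ) : ∃ m : ℤ, lift8 a = ((a + 4 * m : ℤ) : ZMod 8) := by
  refine ⟨-(a / 4), ?_⟩
  rw [lift8, ← Int.cast_natCast, ZMod.val_intCast]
  congr 1
  omega

lemma lift8_intCast_sq (a : ℤ) : lift8 a ^ 2 = ((a ^ 2 : ℤ) : ZMod 8) := by
  obtain ⟨m, hm⟩ := lift8_intCast a
  have h8 : (8 : ZMod 8) = 0 := rfl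
  rw [hm]
  push_cast
  linear_combination (a * m + 2 * m ^ 2) * h8

variable {ι : Type} [Fintype ι]

def euclidQuad (x : ι → ZMod 4) : ZMod 8 := ∑ i, lift8 (x i) ^ 2

lemma natCast_sum_ewt (x : ι → ZMod 4) : ((∑ i, ewt (x i) : ℕ) : ZMod 8) = euclidQuad x := by
  simp only [Nat.cast_sum, natCast_ewt, euclidQuad]

lemma euclidQuad_add (x y : ι → ZMod 4) :
    euclidQuad (x + y) = euclidQuad x + euclidQuad y + twiceLift8 (x ⬝ᵥ y) := by
  simp only [euclidQuad, dotProduct, Pi.add_apply, lift8_add_sq, map_sum,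
    Finset.sum_add_distrib]

lemma euclidQuad_smul (c : ZMod 4) (x : ι → ZMod 4) :
    euclidQuad (c • x) = lift8 c ^ 2 * euclidQuad x := by
  simp only [euclidQuad, Pi.smul_apply, smul_eq_mul, lift8_mul_sq, Finset.mul_sum]

lemma dotProduct_eq_zero_of_mem_span {S : Set (ι → ZMod 4)}
    (hS : ∀ g ∈ S, ∀ h ∈ S, g ⬝ᵥ h = 0) {x y : ι → ZMod 4}
    (hx : x ∈ Submodule.span (ZMod 4) S) (hy : y ∈ Submodule.span (ZMod 4) S) :
    x ⬝ᵥ y = 0 := by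
  induction hx, hy using Submodule.span_induction₂ with
  | mem_mem g h hg hh => exact hS g hg h hh
  | zero_left => exact zero_dotProduct _
  | zero_right => exact dotProduct_zero _
  | add_left _ _ _ _ _ _ h₁ h₂ => rw [add_dotProduct, h₁, h₂, add_zero]
  | add_right _ _ _ _ _ _ h₁ h₂ => rw [dotProduct_add, h₁, h₂, add_zero]
  | smul_left _ _ _ _ _ h => rw [smul_dotProduct, h, smul_zero]
  | smul_right _ _ _ _ _ h => rw [dotProduct_smul, h, smul_zero]

lemma evenCode_span_iff (S : Set (ι → ZMod 4)) :
    evenCode (Submodule.span (ZMod 4) S : Set (ι → ZMod 4)) ↔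
      (∀ g ∈ S, euclidQuad g = 0) ∧ ∀ g ∈ S, ∀ h ∈ S, g ⬝ᵥ h = 0 := by
  have evenCode_iff : evenCode (Submodule.span (ZMod 4) S : Set (ι → ZMod 4)) ↔
      ∀ x ∈ Submodule.span (ZMod 4) S, euclidQuad x = 0 := by
    refine forall₂_congr fun x _ => ?_
    rw [← ZMod.natCast_eq_zero_iff, natCast_sum_ewt]
  rw [evenCode_iff]
  constructor
  · intro H
    refine ⟨fun g hg => H g (Submodule.subset_span hg), fun g hg h hh => ?_⟩
    have hsum := H (g + h) (add_mem (Submodule.subset_span hg) (Submodule.subset_span hh))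
    rwa [euclidQuad_add, H g (Submodule.subset_span hg), H h (Submodule.subset_span hh),
      zero_add, zero_add, twiceLift8_eq_zero_iff] at hsum
  · rintro ⟨hQ, hS⟩ x hx
    induction hx using Submodule.span_induction with
    | mem g hg => exact hQ g hg
    | zero => simp [euclidQuad, lift8]
    | add y z hy hz ihy ihz =>
      rw [euclidQuad_add, ihy, ihz, dotProduct_eq_zero_of_mem_span hS hy hz, map_zero,
        add_zero, add_zero]
    | smul c y _ ih => rw [euclidQuad_smul, ih, mul_zero]

lemma evenCode_intRowSpan_iff {κ : Type} (G : Matrix κ ι ℤ) :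
    evenCode (intRowSpan 4 G : Set (ι → ZMod 4)) ↔
      (∀ u, (8 : ℤ) ∣ (G * Gᵀ) u u) ∧ ∀ u v, (4 : ℤ) ∣ (G * Gᵀ) u v := by
  have hQ (u : κ) : euclidQuad (fun c => (G u c : ZMod 4)) = ((G * Gᵀ) u u : ZMod 8) := by
    simp only [euclidQuad, lift8_intCast_sq, mul_apply, transpose_apply, Int.cast_sum, ← sq]
  have hB (u v : κ) : (fun c => (G u c : ZMod 4)) ⬝ᵥ (fun c => (G v c : ZMod 4)) =
      ((G * Gᵀ) u v : ZMod 4) := by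
    simp only [dotProduct, mul_apply, transpose_apply, Int.cast_sum, Int.cast_mul]
  rw [intRowSpan, evenCode_span_iff]
  simp only [Set.forall_mem_range, hQ, hB, ZMod.intCast_zmod_eq_zero_iff_dvd]
  norm_num

end EuclideanWeight

section GeneratorMatrix

variable {k r : ℕ}

lemma genE_mul_transpose (M : Matrix (Fin k) (Fin r) ℤ) :
    genE k r M * (genE k r M)ᵀ =
      fromBlocks (of fun _ _ => ((1 + k + r : ℕ) : ℤ)) (of fun _ i => 1 + ∑ j, M i j)
        (of fun i _ => 1 + ∑ j, M i j) (1 + M * Mᵀ) := by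
  rw [genE, fromBlocks_transpose, fromBlocks_multiply, transpose_fromCols, fromCols_mul_fromRows]
  congr 1 <;> ext <;> simp [mul_apply, one_apply, Fintype.sum_sum_type, add_assoc]

lemma evenCode_genE_iff (M : Matrix (Fin k) (Fin r) ℤ) :
    evenCode (intRowSpan 4 (genE k r M) : Set ((Unit ⊕ (Fin k ⊕ Fin r)) → ZMod 4)) ↔
      (8 : ℤ) ∣ ((1 + k + r : ℕ) : ℤ) ∧ (∀ i, (4 : ℤ) ∣ 1 + ∑ j, M i j) ∧
        (∀ i, (8 : ℤ) ∣ (1 + M * Mᵀ : Matrix (Fin k) (Fin k) ℤ) i i) ∧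
          ∀ i j, (4 : ℤ) ∣ (1 + M * Mᵀ : Matrix (Fin k) (Fin k) ℤ) i j := by
  rw [evenCode_intRowSpan_iff, genE_mul_transpose]
  simp only [Sum.forall, fromBlocks_apply₁₁, fromBlocks_apply₁₂, fromBlocks_apply₂₁,
    fromBlocks_apply₂₂, of_apply, forall_const]
  constructor
  · rintro ⟨⟨hlen, hdiag⟩, ⟨-, hrow⟩, hrows⟩
    exact ⟨hlen, hrow, hdiag, fun i => (hrows i).2⟩
  · rintro ⟨hlen, hrow, hdiag, hoff⟩
    exact ⟨⟨hlen, hdiag⟩, ⟨dvd_trans (by norm_num) hlen, hrow⟩, fun i => ⟨hrow i, hoff i⟩⟩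

end GeneratorMatrix

section Perturbation

variable {m n : Type} [Fintype n] (A N : Matrix m n ℤ)

lemma add_two_smul_mul_transpose :
    (A + 2 • N) * (A + 2 • N)ᵀ = A * Aᵀ + 2 • (A * Nᵀ + N * Aᵀ) + 4 • (N * Nᵀ) := by
  simp only [transpose_add, transpose_smul, Matrix.add_mul, Matrix.mul_add, Matrix.smul_mul,
    Matrix.mul_smul, smul_add, smul_smul]
  abel

lemma two_dvd_mul_transpose_self_sub_sum (i : m) : (2 : ℤ) ∣ (N * Nᵀ) i i - ∑ j, N i j := by
  simp only [mul_apply, transpose_apply, ← Finset.sum_sub_distrib]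
  refine Finset.dvd_sum fun j _ => ?_
  rw [← mul_sub_one]
  exact even_iff_two_dvd.mp (Int.even_mul_pred_self _)

section

variable [DecidableEq m]

/-- The integer divisions are exact when `2 ∣ (1 + AAᵀ) i j` and `4 ∣ (1 + AAᵀ) i i`. -/
def evenDefect (i j : m) : ℤ :=
  (A * Nᵀ + N * Aᵀ + diagonal (fun l => (A * Nᵀ) l l) : Matrix m m ℤ) i j
    - ((1 + A * Aᵀ : Matrix m m ℤ) i j / 2
      + (1 + diagonal (fun l => (A * Aᵀ) l l) : Matrix m m ℤ) i j / 4)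

variable {A N}

lemma dvd_gram_iff_two_dvd_evenDefect (h2 : ∀ i j, (2 : ℤ) ∣ (1 + A * Aᵀ : Matrix m m ℤ) i j)
    (h4 : ∀ i, (4 : ℤ) ∣ (1 + A * Aᵀ : Matrix m m ℤ) i i) (hN : ∀ i, (2 : ℤ) ∣ ∑ j, N i j) :
    ((∀ i, (8 : ℤ) ∣ (1 + (A + 2 • N) * (A + 2 • N)ᵀ : Matrix m m ℤ) i i) ∧
        ∀ i j, (4 : ℤ) ∣ (1 + (A + 2 • N) * (A + 2 • N)ᵀ : Matrix m m ℤ) i j) ↔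
      ∀ i j, (2 : ℤ) ∣ evenDefect A N i j := by
  have gram (i j : m) : (1 + (A + 2 • N) * (A + 2 • N)ᵀ : Matrix m m ℤ) i j =
      (1 + A * Aᵀ : Matrix m m ℤ) i j + 2 * ((A * Nᵀ) i j + (N * Aᵀ) i j) + 4 * (N * Nᵀ) i j := by
    rw [add_two_smul_mul_transpose]
    simp only [Matrix.add_apply, Matrix.smul_apply, nsmul_eq_mul, Nat.cast_ofNat, add_assoc]
  have diag (i : m) : (8 : ℤ) ∣ (1 + (A + 2 • N) * (A + 2 • N)ᵀ : Matrix m m ℤ) i i ↔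
      (2 : ℤ) ∣ evenDefect A N i i := by
    have hsym : (N * Aᵀ) i i = (A * Nᵀ) i i := by
      rw [← transpose_apply (A * Nᵀ), transpose_mul, transpose_transpose]
    have hA := h4 i
    have hNrow := hN i
    have hNsq := two_dvd_mul_transpose_self_sub_sum N i
    simp only [gram, evenDefect, Matrix.add_apply, one_apply_eq, diagonal_apply_eq, hsym] at hA ⊢
    omega
  have offDiag {i j : m} (hij : i ≠ j) :
      (4 : ℤ) ∣ (1 + (A + 2 • N) * (A + 2 • N)ᵀ : Matrix m m ℤ) i j ↔
        (2 : ℤ) ∣ evenDefect A N i j := by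
    have hA := h2 i j
    simp only [gram, evenDefect, Matrix.add_apply, one_apply_ne hij, diagonal_apply_ne _ hij]
      at hA ⊢
    omega
  constructor
  · rintro ⟨hdiag, hoff⟩ i j
    rcases eq_or_ne i j with rfl | hij
    · exact (diag i).1 (hdiag i)
    · exact (offDiag hij).1 (hoff i j)
  · intro h
    refine ⟨fun i => (diag i).2 (h i i), fun i j => ?_⟩
    rcases eq_or_ne i j with rfl | hij
    · exact dvd_trans (by norm_num) ((diag i).2 (h i i))
    · exact (offDiag hij).2 (h i j)

end

end Perturbation

theorem stmt10_general (n k1 : ℕ) (hn8 : 8 ∣ n) (hk1 : 1 ≤ k1) (hk : k1 ≤ n / 2)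
    (A : Matrix (Fin (k1 - 1)) (Fin (n - k1)) ℤ)
    (h2 : ∀ i j, (2 : ℤ) ∣ ((1 + A * A.transpose : Matrix (Fin (k1 - 1)) (Fin (k1 - 1)) ℤ) i j))
    (h4 : ∀ i, (4 : ℤ) ∣ ((1 + A * A.transpose : Matrix (Fin (k1 - 1)) (Fin (k1 - 1)) ℤ) i i))
    (h14 : ∀ i, (4 : ℤ) ∣ (1 + ∑ j, A i j))
    (N : Matrix (Fin (k1 - 1)) (Fin (n - k1)) ℤ) :
    evenCode ((intRowSpan 4 (genE (k1 - 1) (n - k1) (A + 2 • N)) :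
        Submodule (ZMod 4) ((Unit ⊕ (Fin (k1 - 1) ⊕ Fin (n - k1))) → ZMod 4)) :
        Set ((Unit ⊕ (Fin (k1 - 1) ⊕ Fin (n - k1))) → ZMod 4))
      ↔ (∀ i, (2 : ℤ) ∣ ∑ j, N i j) ∧
        (∀ i j, (2 : ℤ) ∣
          ((A * N.transpose + N * A.transpose +
              Matrix.diagonal (fun l => (A * N.transpose) l l)
              : Matrix (Fin (k1 - 1)) (Fin (k1 - 1)) ℤ) i j
            - (((1 + A * A.transpose : Matrix (Fin (k1 - 1)) (Fin (k1 - 1)) ℤ) i j) / 2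
              + ((1 + Matrix.diagonal (fun l => (A * A.transpose) l l)
                  : Matrix (Fin (k1 - 1)) (Fin (k1 - 1)) ℤ) i j) / 4))) := by
  have hlen : (8 : ℤ) ∣ ((1 + (k1 - 1) + (n - k1) : ℕ) : ℤ) := by
    rw [show 1 + (k1 - 1) + (n - k1) = n by omega]
    exact_mod_cast hn8
  have hrow (i : Fin (k1 - 1)) : (4 : ℤ) ∣ 1 + ∑ j, (A + 2 • N) i j ↔ (2 : ℤ) ∣ ∑ j, N i j := by
    have hA := h14 i
    simp only [Matrix.add_apply, Matrix.smul_apply, nsmul_eq_mul, Nat.cast_ofNat,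
      Finset.sum_add_distrib, ← Finset.mul_sum]
    omega
  rw [evenCode_genE_iff]
  simp only [hlen, hrow, true_and]
  exact and_congr_right fun hN => dvd_gram_iff_two_dvd_evenDefect h2 h4 hN

/-- the quaternary code generated by `[[1, 𝟏, 𝟏], [0, I, A + 2N]]` is even iff
`𝟏Nᵗ ≡ 0 (mod 2)` and `ANᵗ + NAᵗ + Diag(ANᵗ) ≡ (1/2)(I + AAᵗ) + (1/4)(I + Diag(AAᵗ)) (mod 2)`. -/
theorem stmt10 (n k1 : ℕ) (hn8 : 8 ∣ n) (hn : 0 < n) (hk1 : 1 ≤ k1) (hk : k1 ≤ n / 2)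
    (A : Matrix (Fin (k1 - 1)) (Fin (n - k1)) ℤ)
    (hA01 : ∀ i j, A i j = 0 ∨ A i j = 1)
    (h2 : ∀ i j, (2 : ℤ) ∣ ((1 + A * A.transpose : Matrix (Fin (k1 - 1)) (Fin (k1 - 1)) ℤ) i j))
    (h4 : ∀ i, (4 : ℤ) ∣ ((1 + A * A.transpose : Matrix (Fin (k1 - 1)) (Fin (k1 - 1)) ℤ) i i))
    (h14 : ∀ i, (4 : ℤ) ∣ (1 + ∑ j, A i j))
    (N : Matrix (Fin (k1 - 1)) (Fin (n - k1)) ℤ) :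
    evenCode ((intRowSpan 4 (genE (k1 - 1) (n - k1) (A + 2 • N)) :
        Submodule (ZMod 4) ((Unit ⊕ (Fin (k1 - 1) ⊕ Fin (n - k1))) → ZMod 4)) :
        Set ((Unit ⊕ (Fin (k1 - 1) ⊕ Fin (n - k1))) → ZMod 4))
      ↔ (∀ i, (2 : ℤ) ∣ ∑ j, N i j) ∧
        (∀ i j, (2 : ℤ) ∣
          ((A * N.transpose + N * A.transpose +
              Matrix.diagonal (fun l => (A * N.transpose) l l)
              : Matrix (Fin (k1 - 1)) (Fin (k1 - 1)) ℤ) i j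
            - (((1 + A * A.transpose : Matrix (Fin (k1 - 1)) (Fin (k1 - 1)) ℤ) i j) / 2
              + ((1 + Matrix.diagonal (fun l => (A * A.transpose) l l)
                  : Matrix (Fin (k1 - 1)) (Fin (k1 - 1)) ℤ) i j) / 4))) :=
  stmt10_general n k1 hn8 hk1 hk A h2 h4 h14 N

end Paper
end
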